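/- For any Nelson interpretation I and formula φ: I ⊨ (¬φ ∨ (φ ∧ ~φ)) if and only if I ⊨ ¬φ, where I ⊨ χ means I,w ⊩⁺ (¬~χ ∧ χ) at all worlds (under cw-inference, the formula ¬φ ∨ (φ ∧ ~φ) is equivalent to intuitionistic negation). -/

import Mathlib

inductive Formula (Atom : Type) : Type
  | bot : Formula Atom
  | atom : Atom → Formula Atom
  | sneg : Formula Atom → Formula Atom
  | conj : Formula Atom → Formula Atom → Formula Atom
  | disj : Formula Atom → Formula Atom → Formula Atom
  | impl : Formula Atom → Formula Atom → Formula Atom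

structure NelsonInterp (Atom : Type) where
  W : Type
  le : W → W → Prop
  refl : ∀ w, le w w
  trans : ∀ {w₁ w₂ w₃}, le w₁ w₂ → le w₂ w₃ → le w₁ w₃
  Vp : W → Set Atom
  Vm : W → Set Atom
  monoP : ∀ {w w'}, le w w' → Vp w ⊆ Vp w'
  monoM : ∀ {w w'}, le w w' → Vm w ⊆ Vm w'

mutual
  def forceP {Atom : Type} (I : NelsonInterp Atom) (w : I.W) : Formula Atom → Prop
    | .bot => False
    | .atom a => a ∈ I.Vp w
    | .sneg φ => forceM I w φ
    | .conj φ ψ => forceP I w φ ∧ forceP I w ψ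
    | .disj φ ψ => forceP I w φ ∨ forceP I w ψ
    | .impl φ ψ => ∀ w', I.le w w' → (¬ forceP I w' φ ∨ forceP I w' ψ)
  def forceM {Atom : Type} (I : NelsonInterp Atom) (w : I.W) : Formula Atom → Prop
    | .bot => True
    | .atom a => a ∈ I.Vm w
    | .sneg φ => forceP I w φ
    | .conj φ ψ => forceM I w φ ∨ forceM I w ψ
    | .disj φ ψ => forceM I w φ ∧ forceM I w ψ
    | .impl φ ψ => forceP I w φ ∧ forceM I w ψ
end

def Formula.neg {Atom : Type} (φ : Formula Atom) : Formula Atom := φ.impl .bot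

def Formula.supImp {Atom : Type} (φ ψ : Formula Atom) : Formula Atom :=
  ((φ.sneg.neg).conj φ).impl ψ

def Formula.attack {Atom : Type} (φ ψ : Formula Atom) : Formula Atom :=
  φ.supImp ψ.sneg

/-- cw-inference at a world: `I,w ⊨ φ` iff `I,w ⊩⁺ ¬~φ ∧ φ`. -/
def cw {Atom : Type} (I : NelsonInterp Atom) (w : I.W) (φ : Formula Atom) : Prop :=
  forceP I w ((φ.sneg.neg).conj φ)

/-- `I ⊩⁺ φ` : forcing at all worlds. -/
def forcedP {Atom : Type} (I : NelsonInterp Atom) (φ : Formula Atom) : Prop :=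
  ∀ w, forceP I w φ

def forcedM {Atom : Type} (I : NelsonInterp Atom) (φ : Formula Atom) : Prop :=
  ∀ w, forceM I w φ

/-- `I ⊨ φ` : cw-inference at all worlds. -/
def cwAll {Atom : Type} (I : NelsonInterp Atom) (φ : Formula Atom) : Prop :=
  ∀ w, cw I w φ

def NelsonInterp.Consistent {Atom : Type} (I : NelsonInterp Atom) : Prop :=
  ∀ w, I.Vp w ∩ I.Vm w = ∅

/-- An HT-interpretation: two worlds h ≤ t, given by four sets of atoms. -/
structure HTInterp (Atom : Type) where
  Hp : Set Atom
  Hm : Set Atom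
  Tp : Set Atom
  Tm : Set Atom
  subP : Hp ⊆ Tp
  subM : Hm ⊆ Tm

/-- The underlying Nelson interpretation: world `false` is h, world `true` is t. -/
def HTInterp.toNelson {Atom : Type} (I : HTInterp Atom) : NelsonInterp Atom where
  W := Bool
  le := (· ≤ ·)
  refl := le_refl
  trans := le_trans
  Vp := fun w => if w then I.Tp else I.Hp
  Vm := fun w => if w then I.Tm else I.Hm
  monoP := by
    intro w w' hle
    match w, w', hle with
    | false, false, _ => exact subset_rfl
    | false, true, _ => exact I.subP
    | true, true, _ => exact subset_rfl
    | true, false, h => exact absurd h (by decide)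
  monoM := by
    intro w w' hle
    match w, w', hle with
    | false, false, _ => exact subset_rfl
    | false, true, _ => exact I.subM
    | true, true, _ => exact subset_rfl
    | true, false, h => exact absurd h (by decide)

/-! Both `~¬φ` and `~(¬φ ∨ (φ ∧ ~φ))` are forced exactly where `φ` is, so on either side the `¬~`
conjunct of cw-inference says that `¬φ` is forced; and where `¬φ` is forced, `φ ∧ ~φ` is not. -/

section Forcing

variable {Atom : Type} (I : NelsonInterp Atom) (w : I.W) (φ : Formula Atom)

theorem forceP_neg : forceP I w φ.neg ↔ ∀ w', I.le w w' → ¬ forceP I w' φ := by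
  simp [Formula.neg, forceP]

theorem forceM_neg : forceM I w φ.neg ↔ forceP I w φ := by
  simp [Formula.neg, forceM]

theorem forceM_neg_disj_conj_sneg :
    forceM I w (φ.neg.disj (φ.conj φ.sneg)) ↔ forceP I w φ := by
  rw [forceM, forceM_neg, forceM, forceM]
  exact and_iff_left_of_imp Or.inr

theorem cw_iff : cw I w φ ↔ (∀ w', I.le w w' → ¬ forceM I w' φ) ∧ forceP I w φ := by
  rw [cw, forceP, forceP_neg]
  rfl

theorem cw_neg_iff_forceP_neg : cw I w φ.neg ↔ forceP I w φ.neg := by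
  simp only [cw_iff, forceM_neg, ← forceP_neg, and_self]

theorem cw_neg_disj_conj_sneg_iff_forceP_neg :
    cw I w (φ.neg.disj (φ.conj φ.sneg)) ↔ forceP I w φ.neg := by
  simp only [cw_iff, forceM_neg_disj_conj_sneg, ← forceP_neg, forceP]
  exact and_iff_left_of_imp Or.inl

end Forcing

theorem cwAll_default_negation_alt {Atom : Type} (I : NelsonInterp Atom)
    (φ : Formula Atom) :
    cwAll I ((φ.neg).disj (φ.conj φ.sneg)) ↔ cwAll I φ.neg :=
  forall_congr' fun w =>
    (cw_neg_disj_conj_sneg_iff_forceP_neg I w φ).trans (cw_neg_iff_forceP_neg I w φ).symm
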